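/- arXiv:2501.08310 — 5 statements merged into one kernel-verified Lean document; each statement's English description precedes it below -/
import Mathlib

section
/- The quadratic form Σ_{j=1}^{q+1} λ_j θ_j², restricted to the hyperplane Σ_{j=1}^{q+1} θ_j = 0 (parametrized by θ_2,…,θ_{q+1} via θ_1 = -(θ_2+…+θ_{q+1})), has as determinant of the corresponding (q×q) symmetric matrix the q-th elementary symmetric polynomial e_q(λ_1,…,λ_{q+1}) = Σ_{|I|=q} Π_{i∈I} λ_i. -/
open Finset Matrix

private lemma det_updateRow_diagonal_const {n : Type*} [DecidableEq n] [Fintype n]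
    {R : Type*} [CommRing R] (d : n → R) (k : n) (c : R) :
    Matrix.det (Matrix.updateRow (Matrix.diagonal d) k (fun _ => c))
      = c * ∏ i ∈ Finset.univ.erase k, d i := by
  have hc : (fun _ => c : n → R) = ∑ j : n, Pi.single j c := by
    funext x
    simp [Pi.single_apply]
  rw [hc]
  have hms := (Matrix.detRowAlternating : (n → R) [⋀^n]→ₗ[R] R).toMultilinearMap.map_update_sum
    Finset.univ k (fun j => Pi.single j c) (Matrix.diagonal d)
  have hdet : ∀ v : n → R,
      Matrix.det (Matrix.updateRow (Matrix.diagonal d) k v)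
        = (Matrix.detRowAlternating : (n → R) [⋀^n]→ₗ[R] R).toMultilinearMap
            (Function.update (Matrix.diagonal d) k v) := fun _ => rfl
  rw [hdet, hms]
  rw [Finset.sum_eq_single k]
  · have hupd : Function.update (Matrix.diagonal d) k (Pi.single k c)
        = Matrix.diagonal (Function.update d k c) := by
      funext i j
      rcases eq_or_ne i k with rfl | hik
      · simp [Function.update, Pi.single_apply, Matrix.diagonal_apply, eq_comm]
      · simp [Function.update, hik, Matrix.diagonal_apply]
    rw [hupd]
    show Matrix.det _ = _
    rw [Matrix.det_diagonal, ← Finset.mul_prod_erase _ _ (Finset.mem_univ k)]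
    congr 1
    · simp
    · exact Finset.prod_congr rfl fun i hi => by
        simp [Function.update, (Finset.mem_erase.mp hi).1]
  · intro j _ hjk
    rw [← hdet]
    apply Matrix.det_eq_zero_of_column_eq_zero k
    intro i
    rcases eq_or_ne i k with rfl | hik
    · simp [Pi.single_apply, hjk.symm, Ne.symm hjk]
    · simp [Matrix.diagonal_apply, hik]
  · simp

/-- The quadratic form `Σ_{j=1}^{q+1} λ_j θ_j²` restricted to the hyperplane
`Σ θ_j = 0` (with `θ_1 = -(θ_2 + … + θ_{q+1})`) has as symmetric matrix
`M i j = λ_1 + (if i = j then λ_{i+1} else 0)`, whose determinant is the `q`-th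
elementary symmetric polynomial `e_q(λ_1, …, λ_{q+1})`. -/
theorem det_restricted_quadratic_form_eq_esymm (R : Type*) [CommRing R] (q : ℕ)
    (l : Fin (q + 1) → R) :
    Matrix.det (Matrix.of fun i j : Fin q => l 0 + if i = j then l i.succ else 0)
      = ∑ I ∈ Finset.univ.powersetCard q, ∏ i ∈ I, l i := by
  set d : Fin q → R := fun i => l i.succ with hd
  -- rewrite RHS as a sum over the missing index
  have hRHS : ∑ I ∈ Finset.univ.powersetCard q, ∏ i ∈ I, l i
      = ∑ k : Fin (q + 1), ∏ i ∈ Finset.univ.erase k, l i := by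
    have himg : (Finset.univ : Finset (Fin (q+1))).powersetCard q
        = Finset.image (fun k => Finset.univ.erase k) Finset.univ := by
      ext I
      simp only [Finset.mem_powersetCard, Finset.mem_image, Finset.mem_univ, true_and]
      constructor
      · rintro ⟨hsub, hcard⟩
        have h1 : (Finset.univ \ I).card = 1 := by
          rw [Finset.card_sdiff_of_subset hsub, hcard, Finset.card_univ, Fintype.card_fin]
          omega
        obtain ⟨k, hk⟩ := Finset.card_eq_one.mp h1
        refine ⟨k, ?_⟩
        have hI : I = Finset.univ \ (Finset.univ \ I) := (Finset.sdiff_sdiff_eq_self hsub).symm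
        rw [hk] at hI
        rw [hI, Finset.sdiff_singleton_eq_erase]
      · rintro ⟨k, rfl⟩
        refine ⟨Finset.erase_subset _ _, ?_⟩
        rw [Finset.card_erase_of_mem (Finset.mem_univ k), Finset.card_univ, Fintype.card_fin]
        omega
    rw [himg, Finset.sum_image]
    intro x _ y _ hxy
    by_contra hne
    have hmem : x ∈ Finset.univ.erase y := Finset.mem_erase.mpr ⟨hne, Finset.mem_univ x⟩
    rw [← (show Finset.univ.erase x = Finset.univ.erase y from hxy)] at hmem
    exact (Finset.mem_erase.mp hmem).1 rfl
  rw [hRHS]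
  -- LHS: split the matrix as constant + diagonal and expand multilinearly
  set A : Fin q → Fin q → R := fun _ _ => l 0 with hA
  set B : Fin q → Fin q → R := fun i => Matrix.diagonal d i with hB
  have hM : (Matrix.of fun i j : Fin q => l 0 + if i = j then l i.succ else 0)
      = Matrix.of (A + B) := by
    funext i j
    simp [hA, hB, Matrix.diagonal_apply, hd]
  rw [hM]
  have hdet : Matrix.det (Matrix.of (A + B))
      = (Matrix.detRowAlternating : (Fin q → R) [⋀^Fin q]→ₗ[R] R).toMultilinearMap (A + B) := rfl
  rw [hdet,
    (Matrix.detRowAlternating : (Fin q → R) [⋀^Fin q]→ₗ[R] R).toMultilinearMap.map_add_univ A B]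
  set f : Finset (Fin q) → R :=
    fun s => (Matrix.detRowAlternating : (Fin q → R) [⋀^Fin q]→ₗ[R] R).toMultilinearMap
      (s.piecewise A B) with hf
  have hzero : ∀ s : Finset (Fin q), 2 ≤ s.card → f s = 0 := by
    intro s hs
    obtain ⟨a, ha, b, hb, hab⟩ := Finset.one_lt_card.mp hs
    have h0 : Matrix.det (Matrix.of (s.piecewise A B)) = 0 := by
      apply Matrix.det_zero_of_row_eq hab
      show s.piecewise A B a = s.piecewise A B b
      rw [Finset.piecewise_eq_of_mem _ _ _ ha, Finset.piecewise_eq_of_mem _ _ _ hb]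
    exact h0
  set T : Finset (Finset (Fin q)) := insert ∅ (Finset.image (fun k => ({k} : Finset (Fin q))) Finset.univ) with hT
  have hsum : ∑ s : Finset (Fin q), f s = ∑ s ∈ T, f s := by
    refine (Finset.sum_subset (Finset.subset_univ T) ?_).symm
    intro s _ hsT
    apply hzero
    simp only [hT, Finset.mem_insert, Finset.mem_image, Finset.mem_univ, true_and,
      not_or, not_exists] at hsT
    rcases Nat.lt_or_ge s.card 2 with h2 | h2
    · interval_cases h : s.card
      · exact absurd (Finset.card_eq_zero.mp h) hsT.1
      · obtain ⟨k, hk⟩ := Finset.card_eq_one.mp h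
        exact absurd hk.symm (hsT.2 k)
    · exact h2
  rw [hsum, hT, Finset.sum_insert (by simp), Finset.sum_image (fun a _ b _ h => Finset.singleton_injective h)]
  have hempty : f ∅ = ∏ i : Fin q, d i := by
    simp only [hf, Finset.piecewise_empty]
    show Matrix.det (Matrix.diagonal d) = _
    exact Matrix.det_diagonal
  have hsingle : ∀ k : Fin q, f {k} = l 0 * ∏ i ∈ Finset.univ.erase k, d i := by
    intro k
    simp only [hf, Finset.piecewise_singleton]
    show Matrix.det (Matrix.updateRow (Matrix.diagonal d) k (A k)) = _
    exact det_updateRow_diagonal_const d k (l 0)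
  rw [hempty]
  simp only [hsingle]
  -- now RHS side reindexing
  rw [Fin.sum_univ_succ]
  congr 1
  · -- ∏ over erase 0 = ∏ d
    have h0 : (Finset.univ : Finset (Fin (q+1))).erase 0 = Finset.image Fin.succ Finset.univ := by
      ext i
      simp only [Finset.mem_erase, Finset.mem_univ, and_true, Finset.mem_image, true_and]
      constructor
      · intro hi
        obtain ⟨j, rfl⟩ := Fin.eq_succ_of_ne_zero hi
        exact ⟨j, rfl⟩
      · rintro ⟨j, rfl⟩
        exact Fin.succ_ne_zero j
    rw [h0, Finset.prod_image (fun a _ b _ h => Fin.succ_injective _ h)]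
  · refine Finset.sum_congr rfl fun k _ => ?_
    have hk : (Finset.univ : Finset (Fin (q+1))).erase k.succ
        = insert (0 : Fin (q+1)) (Finset.image Fin.succ (Finset.univ.erase k)) := by
      ext i
      simp only [Finset.mem_erase, Finset.mem_univ, and_true, Finset.mem_insert,
        Finset.mem_image, true_and]
      constructor
      · intro hi
        rcases eq_or_ne i 0 with rfl | hi0
        · exact Or.inl rfl
        · obtain ⟨j, rfl⟩ := Fin.eq_succ_of_ne_zero hi0
          exact Or.inr ⟨j, fun hjk => hi (by rw [hjk]), rfl⟩
      · rintro (rfl | ⟨j, hjk, rfl⟩)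
        · exact (Fin.succ_ne_zero k).symm
        · exact fun h => hjk (Fin.succ_injective _ h)
    rw [hk, Finset.prod_insert (by simp [Fin.succ_ne_zero]),
      Finset.prod_image (fun a _ b _ h => Fin.succ_injective _ h)]
end

section
/- For scalars λ_1,…,λ_{k+1}, λ_j, the identity e_k(λ_1,…,λ_k,λ_j)·e_k(λ_1,…,λ_{k+1}) - (λ_1⋯λ_k)² = e_{k-1}(λ_1,…,λ_k)·e_{k+1}(λ_1,…,λ_{k+1},λ_j) holds, where e_m denotes the elementary symmetric polynomial of degree m. -/
open Multiset in
lemma aux_powersetCard_self {α : Type*} (s : Multiset α) :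
    s.powersetCard (Multiset.card s) = {s} := by
  obtain ⟨t, ht⟩ := card_eq_one.mp (by simp : Multiset.card (s.powersetCard (Multiset.card s)) = 1)
  have h : t ∈ s.powersetCard (Multiset.card s) := ht ▸ mem_singleton_self t
  rw [mem_powersetCard] at h
  rw [ht, eq_of_le_of_card_le h.1 h.2.ge]

open Multiset in
lemma aux_esymm_self {R : Type*} [CommRing R] (s : Multiset R) :
    s.esymm (Multiset.card s) = s.prod := by
  simp [esymm, aux_powersetCard_self]

open Multiset in
lemma aux_esymm_zero_of_lt {R : Type*} [CommRing R] (s : Multiset R) {n : ℕ}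
    (h : Multiset.card s < n) : s.esymm n = 0 := by
  simp [esymm, powersetCard_eq_empty _ h]

open Multiset in
lemma aux_esymm_cons {R : Type*} [CommRing R] (a : R) (s : Multiset R) (n : ℕ) :
    (a ::ₘ s).esymm (n + 1) = s.esymm (n + 1) + a * s.esymm n := by
  simp only [esymm, powersetCard_cons, map_add, sum_add, map_map, Function.comp_def,
    prod_cons]
  rw [← Multiset.sum_map_mul_left]

/-- For a multiset `s = {λ_1, …, λ_k}` of cardinality `k ≥ 1` and scalars
`a = λ_j`, `b = λ_{k+1}`:
`e_k(λ_1,…,λ_k,λ_j) · e_k(λ_1,…,λ_{k+1}) - (λ_1⋯λ_k)²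
  = e_{k-1}(λ_1,…,λ_k) · e_{k+1}(λ_1,…,λ_{k+1},λ_j)`. -/
theorem esymm_identity_one (R : Type*) [CommRing R] (k : ℕ) (hk : 0 < k)
    (s : Multiset R) (hs : Multiset.card s = k) (a b : R) :
    (a ::ₘ s).esymm k * (b ::ₘ s).esymm k - s.prod ^ 2
      = s.esymm (k - 1) * (a ::ₘ b ::ₘ s).esymm (k + 1) := by
  obtain ⟨m, rfl⟩ := Nat.exists_eq_add_of_lt hk
  simp only [Nat.add_sub_cancel, zero_add] at *
  have hP : s.esymm (m + 1) = s.prod := hs ▸ aux_esymm_self s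
  have h0 : s.esymm (m + 2) = 0 := aux_esymm_zero_of_lt s (by omega)
  rw [aux_esymm_cons a s m, aux_esymm_cons b s m,
    show m + 1 + 1 = m + 2 from rfl, aux_esymm_cons a (b ::ₘ s) (m + 1),
    aux_esymm_cons b s (m + 1), aux_esymm_cons b s m, hP, h0]
  ring
end

section
/- For complex λ with |λ| < 1, the generating function of the multiple zeta values ζ(2,…,2) satisfies Δ₂(λ) := Σ_{k≥0} (-1)^k ζ({2}^k) λ^{2k} = sin(πλ)/(πλ), where ζ({2}^k) = ζ(2,…,2) with k twos and ζ({2}^0) = 1. -/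
open scoped Real

/-- The multiple zeta value `ζ(2,…,2)` with `k` twos:
`ζ({2}^k) = Σ_{0 < n_1 < … < n_k} 1/(n_1² ⋯ n_k²)`, encoded by strictly
monotone maps `f : Fin k → ℕ` with `n_i = f i + 1`. -/
noncomputable def zetaTwos (k : ℕ) : ℂ :=
  ∑' f : {f : Fin k → ℕ // StrictMono f}, ∏ i, (1 : ℂ) / ((f.1 i : ℂ) + 1) ^ 2

open Finset Filter

/-- Strictly monotone maps `Fin k → ℕ` correspond to finsets of card `k`. -/
noncomputable def monoEquiv (k : ℕ) :
    {f : Fin k → ℕ // StrictMono f} ≃ {s : Finset ℕ // s.card = k} where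
  toFun f := ⟨Finset.image f.1 Finset.univ, by
    rw [Finset.card_image_of_injective _ f.2.injective, Finset.card_univ, Fintype.card_fin]⟩
  invFun s := ⟨s.1.orderEmbOfFin s.2, (s.1.orderEmbOfFin s.2).strictMono⟩
  left_inv f := Subtype.ext <| (Finset.orderEmbOfFin_unique _
      (fun x => Finset.mem_image_of_mem _ (Finset.mem_univ x)) f.2).symm
  right_inv s := Subtype.ext <| by
    apply Finset.coe_injective
    rw [Finset.coe_image, Finset.coe_univ, Set.image_univ, Finset.range_orderEmbOfFin]

lemma prod_image_univ {k : ℕ} (f : {f : Fin k → ℕ // StrictMono f}) (a : ℕ → ℂ) :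
    ∏ n ∈ Finset.image f.1 Finset.univ, a n = ∏ i, a (f.1 i) :=
  Finset.prod_image (fun p _ q _ h => f.2.injective h)

lemma zetaTwos_eq (k : ℕ) :
    zetaTwos k = ∑' s : {s : Finset ℕ // s.card = k}, ∏ n ∈ s.1, (1 : ℂ) / ((n : ℂ) + 1) ^ 2 := by
  rw [zetaTwos, ← Equiv.tsum_eq (monoEquiv k)]
  exact tsum_congr fun f =>
    (prod_image_univ f (fun n => (1 : ℂ) / ((n : ℂ) + 1) ^ 2)).symm

lemma zetaTwos_zero : zetaTwos 0 = 1 := by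
  have hu : Unique {f : Fin 0 → ℕ // StrictMono f} :=
    ⟨⟨⟨fun i => i.elim0, by intro a b h; exact a.elim0⟩⟩,
      fun f => Subtype.ext (funext fun i => i.elim0)⟩
  rw [zetaTwos, tsum_eq_single (hu.default) (fun b hb => absurd (hu.uniq b) hb)]
  simp

/-- Summability of products over finsets, given summable norms. -/
lemma summable_prod_finset {g : ℕ → ℂ} (hg : Summable fun n => ‖g n‖) :
    Summable fun s : Finset ℕ => ∏ n ∈ s, g n := by
  apply Summable.of_norm
  have hnn : 0 ≤ fun s : Finset ℕ => ‖∏ n ∈ s, g n‖ := fun s => norm_nonneg _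
  apply summable_of_sum_le hnn (c := Real.exp (∑' n, ‖g n‖))
  intro u
  set N := (u.sup fun s => s.sup id) + 1 with hN
  have hsub : ∀ s ∈ u, s ⊆ Finset.range N := by
    intro s hs m hm
    rw [Finset.mem_range, hN]
    exact Nat.lt_succ_of_le (le_trans (Finset.le_sup (f := id) hm)
      (Finset.le_sup (f := fun s => s.sup id) hs))
  have h1 : ∑ s ∈ u, ‖∏ n ∈ s, g n‖ ≤ ∑ s ∈ (Finset.range N).powerset, ‖∏ n ∈ s, g n‖ := by
    apply Finset.sum_le_sum_of_subset_of_nonneg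
    · intro s hs; exact Finset.mem_powerset.mpr (hsub s hs)
    · intro s _ _; exact norm_nonneg _
  have h2 : ∑ s ∈ (Finset.range N).powerset, ‖∏ n ∈ s, g n‖
      = ∏ n ∈ Finset.range N, (‖g n‖ + 1) := by
    rw [Finset.prod_add]
    refine Finset.sum_congr rfl fun s _ => ?_
    simp [norm_prod]
  have h3 : ∏ n ∈ Finset.range N, (‖g n‖ + 1) ≤ Real.exp (∑' n, ‖g n‖) := by
    calc ∏ n ∈ Finset.range N, (‖g n‖ + 1)
        ≤ ∏ n ∈ Finset.range N, Real.exp ‖g n‖ := by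
          apply Finset.prod_le_prod
          · intro n _; positivity
          · intro n _; exact Real.add_one_le_exp _
      _ = Real.exp (∑ n ∈ Finset.range N, ‖g n‖) := by rw [Real.exp_sum]
      _ ≤ Real.exp (∑' n, ‖g n‖) := by
          exact Real.exp_le_exp.mpr (Summable.sum_le_tsum _ (fun n _ => norm_nonneg _) hg)
  linarith

lemma summable_inv_sq : Summable fun n : ℕ => 1 / ((n : ℝ) + 1) ^ 2 := by
  have := (summable_nat_add_iff 1).mpr (Real.summable_one_div_nat_pow.mpr one_lt_two)
  convert this using 2 with n
  · rfl
  push_cast; ring_nf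

lemma norm_g (l : ℂ) (n : ℕ) :
    ‖-l ^ 2 / ((n : ℂ) + 1) ^ 2‖ = ‖l‖ ^ 2 * (1 / ((n : ℝ) + 1) ^ 2) := by
  have h1 : ((n : ℂ) + 1) = ((n + 1 : ℕ) : ℂ) := by push_cast; ring
  have h2 : ‖(n : ℂ) + 1‖ = (n : ℝ) + 1 := by
    rw [h1, Complex.norm_natCast]; push_cast; ring
  rw [norm_div, norm_neg, norm_pow, norm_pow, h2]
  rw [mul_one_div]

set_option maxHeartbeats 1000000 in
/-- For `‖λ‖ < 1`, the generating function of the `ζ(2,…,2)`'s satisfies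
`Δ₂(λ) = Σ_k (-1)^k ζ({2}^k) λ^{2k} = sin(πλ)/(πλ)` (extended by `1` at `λ=0`). -/
theorem delta_two_eq_sinc (l : ℂ) (hl : ‖l‖ < 1) :
    ∑' k : ℕ, (-1) ^ k * zetaTwos k * l ^ (2 * k)
      = if l = 0 then 1 else Complex.sin (Real.pi * l) / (Real.pi * l) := by
  by_cases h0 : l = 0
  · subst h0
    rw [if_pos rfl, tsum_eq_single 0 (fun k hk => by
      simp [zero_pow (by omega : 2 * k ≠ 0)])]
    norm_num [zetaTwos_zero]
  rw [if_neg h0]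
  have hgnorm : Summable fun n : ℕ => ‖-l ^ 2 / ((n : ℂ) + 1) ^ 2‖ := by
    simp_rw [norm_g]
    exact summable_inv_sq.mul_left _
  have hFs : Summable fun s : Finset ℕ => ∏ n ∈ s, (-l ^ 2 / ((n : ℂ) + 1) ^ 2) :=
    summable_prod_finset hgnorm
  have hcof : Filter.Tendsto (fun N => (Finset.range N).powerset)
      Filter.atTop (Filter.atTop : Filter (Finset (Finset ℕ))) := by
    apply tendsto_atTop_finset_of_monotone
    · intro m n hmn
      exact Finset.powerset_mono.mpr (Finset.range_subset_range.mpr hmn)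
    · intro s
      exact ⟨s.sup id + 1, Finset.mem_powerset.mpr fun m hm =>
        Finset.mem_range.mpr (Nat.lt_succ_of_le (Finset.le_sup (f := id) hm))⟩
  have hlim1 : Filter.Tendsto
      (fun N => ∑ s ∈ (Finset.range N).powerset, ∏ n ∈ s, (-l ^ 2 / ((n : ℂ) + 1) ^ 2))
      Filter.atTop (nhds (∑' s : Finset ℕ, ∏ n ∈ s, (-l ^ 2 / ((n : ℂ) + 1) ^ 2))) :=
    hFs.hasSum.comp hcof
  have hps : ∀ N, ∑ s ∈ (Finset.range N).powerset, ∏ n ∈ s, (-l ^ 2 / ((n : ℂ) + 1) ^ 2)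
      = ∏ n ∈ Finset.range N, (1 - l ^ 2 / ((n : ℂ) + 1) ^ 2) := by
    intro N
    have h1 : ∀ n ∈ Finset.range N,
        (1 : ℂ) - l ^ 2 / ((n : ℂ) + 1) ^ 2 = -l ^ 2 / ((n : ℂ) + 1) ^ 2 + 1 := by
      intro n _; ring
    rw [Finset.prod_congr rfl h1, Finset.prod_add]
    refine (Finset.sum_congr rfl fun s _ => ?_).symm
    rw [Finset.prod_const_one, mul_one]
  have hpl : (Real.pi : ℂ) * l ≠ 0 :=
    mul_ne_zero (Complex.ofReal_ne_zero.mpr Real.pi_ne_zero) h0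
  have hlim2 : Filter.Tendsto (fun N => ∏ n ∈ Finset.range N, (1 - l ^ 2 / ((n : ℂ) + 1) ^ 2))
      Filter.atTop (nhds (Complex.sin (Real.pi * l) / (Real.pi * l))) := by
    have h := (Complex.tendsto_euler_sin_prod l).const_mul (((Real.pi : ℂ) * l)⁻¹)
    rw [div_eq_inv_mul]
    refine h.congr fun N => ?_
    rw [← mul_assoc, inv_mul_cancel₀ hpl, one_mul]
  have hkey : (∑' s : Finset ℕ, ∏ n ∈ s, (-l ^ 2 / ((n : ℂ) + 1) ^ 2))
      = Complex.sin (Real.pi * l) / (Real.pi * l) := by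
    refine tendsto_nhds_unique ?_ hlim2
    simpa only [hps] using hlim1
  have hterm : ∀ k : ℕ, (-1 : ℂ) ^ k * zetaTwos k * l ^ (2 * k)
      = ∑' s : {s : Finset ℕ // s.card = k}, ∏ n ∈ s.1, (-l ^ 2 / ((n : ℂ) + 1) ^ 2) := by
    intro k
    have hxk : (-1 : ℂ) ^ k * zetaTwos k * l ^ (2 * k) = (-l ^ 2) ^ k * zetaTwos k := by
      rw [neg_pow, pow_mul]; ring
    rw [hxk, zetaTwos_eq, ← tsum_mul_left]
    refine tsum_congr fun s => ?_
    have : ∀ n ∈ s.1, -l ^ 2 / ((n : ℂ) + 1) ^ 2 = -l ^ 2 * (1 / ((n : ℂ) + 1) ^ 2) := by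
      intro n _; ring
    rw [Finset.prod_congr rfl this, Finset.prod_mul_distrib, Finset.prod_const, s.2]
  let e : (Σ k : ℕ, {s : Finset ℕ // s.card = k}) ≃ Finset ℕ :=
    { toFun := fun p => p.2.1
      invFun := fun s => ⟨s.card, s, rfl⟩
      left_inv := fun p => by
        obtain ⟨k, s, hs⟩ := p
        subst hs; rfl
      right_inv := fun s => rfl }
  have hFe : Summable fun p : Σ k : ℕ, {s : Finset ℕ // s.card = k} =>
      ∏ n ∈ (e p), (-l ^ 2 / ((n : ℂ) + 1) ^ 2) := e.summable_iff.mpr hFs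
  calc ∑' k : ℕ, (-1 : ℂ) ^ k * zetaTwos k * l ^ (2 * k)
      = ∑' k : ℕ, ∑' s : {s : Finset ℕ // s.card = k},
          ∏ n ∈ s.1, (-l ^ 2 / ((n : ℂ) + 1) ^ 2) := tsum_congr hterm
    _ = ∑' p : Σ k : ℕ, {s : Finset ℕ // s.card = k},
          ∏ n ∈ (e p), (-l ^ 2 / ((n : ℂ) + 1) ^ 2) := (Summable.tsum_sigma hFe).symm
    _ = ∑' s : Finset ℕ, ∏ n ∈ s, (-l ^ 2 / ((n : ℂ) + 1) ^ 2) :=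
          e.tsum_eq fun s => ∏ n ∈ s, (-l ^ 2 / ((n : ℂ) + 1) ^ 2)
    _ = Complex.sin (Real.pi * l) / (Real.pi * l) := hkey
end

section
/- In the Banach space of power series without constant term (equipped with a norm making multiplication by t a contraction relative to Q⁻¹), the operator Q(D_t) - t·P(D_t) is invertible and its inverse is given by the Neumann series Q⁻¹ + Q⁻¹(tPQ⁻¹) + Q⁻¹(tPQ⁻¹)² + …; in particular (Q - tP)⁻¹ t^n = Σ_{m≥0} [P(n)P(n+1)⋯P(n+m-1)/(Q(n)Q(n+1)⋯Q(n+m))] t^{n+m}, provided Q(k) ≠ 0 for all integers k > 0. -/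
open PowerSeries Polynomial

noncomputable def eulerD : Module.End ℂ (PowerSeries ℂ) :=
  (LinearMap.mulLeft ℂ (PowerSeries.X : PowerSeries ℂ)).comp
    (PowerSeries.derivative ℂ).toLinearMap

lemma coeff_eulerD (f : PowerSeries ℂ) (m : ℕ) :
    PowerSeries.coeff m (eulerD f) = m * PowerSeries.coeff m f := by
  cases m with
  | zero => simp [eulerD, LinearMap.mulLeft_apply]
  | succ k =>
      simp [eulerD, LinearMap.mulLeft_apply, coeff_succ_X_mul,
        PowerSeries.coeff_derivative]
      ring

lemma coeff_eulerD_pow (k : ℕ) (f : PowerSeries ℂ) (m : ℕ) :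
    PowerSeries.coeff m ((eulerD ^ k) f) = (m : ℂ) ^ k * PowerSeries.coeff m f := by
  induction k with
  | zero => simp
  | succ j ih =>
      rw [pow_succ', Module.End.mul_apply, coeff_eulerD, ih, pow_succ]
      ring

lemma coeff_aeval (R : Polynomial ℂ) (f : PowerSeries ℂ) (m : ℕ) :
    PowerSeries.coeff m (Polynomial.aeval eulerD R f) =
      R.eval (m : ℂ) * PowerSeries.coeff m f := by
  induction R using Polynomial.induction_on' with
  | add p q hp hq => simp [map_add, LinearMap.add_apply, hp, hq, add_mul]
  | monomial k a =>
      simp only [aeval_monomial, eval_monomial, Module.End.mul_apply,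
        Module.algebraMap_end_apply, map_smul, coeff_eulerD_pow, smul_eq_mul]
      ring

/-- Provided `Q(k) ≠ 0` for all integers `k > 0`, the operator `Q(D_t) - t·P(D_t)`
on power series without constant term is inverted by the Neumann series
`Q⁻¹ + Q⁻¹(tPQ⁻¹) + Q⁻¹(tPQ⁻¹)² + …`; in particular
`(Q - tP)⁻¹ t^n = Σ_{m≥0} [P(n)⋯P(n+m-1) / (Q(n)⋯Q(n+m))] t^{n+m}`,
i.e. the series on the right is mapped to `t^n` by `Q(D_t) - t·P(D_t)`. -/
theorem neumann_series_inverse (Q P : Polynomial ℂ)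
    (hQ : ∀ k : ℕ, 0 < k → Q.eval (k : ℂ) ≠ 0) (n : ℕ) (hn : 0 < n) :
    (Polynomial.aeval eulerD Q)
        (PowerSeries.mk fun m : ℕ =>
          if n ≤ m then
            (∏ i ∈ Finset.range (m - n), P.eval ((n + i : ℕ) : ℂ)) /
              (∏ i ∈ Finset.range (m - n + 1), Q.eval ((n + i : ℕ) : ℂ))
          else 0)
      - PowerSeries.X * (Polynomial.aeval eulerD P)
        (PowerSeries.mk fun m : ℕ =>
          if n ≤ m then
            (∏ i ∈ Finset.range (m - n), P.eval ((n + i : ℕ) : ℂ)) /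
              (∏ i ∈ Finset.range (m - n + 1), Q.eval ((n + i : ℕ) : ℂ))
          else 0)
      = PowerSeries.X ^ n := by
  set c : ℕ → ℂ := fun m =>
    if n ≤ m then
      (∏ i ∈ Finset.range (m - n), P.eval ((n + i : ℕ) : ℂ)) /
        (∏ i ∈ Finset.range (m - n + 1), Q.eval ((n + i : ℕ) : ℂ))
    else 0 with hc
  ext m
  rw [map_sub, coeff_aeval, PowerSeries.coeff_mk, PowerSeries.coeff_X_pow]
  cases m with
  | zero =>
      have : c 0 = 0 := by simp [hc, Nat.not_le.mpr hn]
      simp [this, coeff_zero_X_mul, hn.ne]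
  | succ k =>
      rw [coeff_succ_X_mul, coeff_aeval, PowerSeries.coeff_mk]
      rcases lt_trichotomy (k + 1) n with h | h | h
      · have h1 : ¬ n ≤ k + 1 := by omega
        have h2 : ¬ n ≤ k := by omega
        have h3 : k + 1 ≠ n := by omega
        simp [hc, h1, h2, h3]
      · have h2 : ¬ n ≤ k := by omega
        have hck : c (k+1) = 1 / Q.eval ((n : ℕ) : ℂ) := by
          simp [hc, h, Nat.le_refl]
        have : ((k : ℂ) + 1) = ((n : ℕ) : ℂ) := by
          rw [← h]; push_cast; ring
        rw [hck]
        simp only [hc, if_neg h2, mul_zero, sub_zero, if_pos h]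
        have hQn := hQ n hn
        rw [← h] at hQn ⊢
        push_cast at hQn ⊢
        field_simp
      · have hle : n ≤ k := by omega
        obtain ⟨d, rfl⟩ := Nat.exists_eq_add_of_le hle
        have e1 : n + d + 1 - n = d + 1 := by omega
        have e2 : n + d - n = d := by omega
        have h3 : n + d + 1 ≠ n := by omega
        simp only [hc, if_pos (by omega : n ≤ n + d + 1), if_pos (by omega : n ≤ n + d),
          e1, e2, if_neg h3]
        have hQprod : (∏ i ∈ Finset.range (d + 1), Q.eval ((n + i : ℕ) : ℂ)) ≠ 0 := by
          apply Finset.prod_ne_zero_iff.mpr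
          intro i _
          exact hQ (n + i) (by omega)
        have hQlast : Q.eval ((n + (d + 1) : ℕ) : ℂ) ≠ 0 := hQ _ (by omega)
        rw [Finset.prod_range_succ (fun i => Q.eval ((n + i : ℕ) : ℂ)) (d+1),
            Finset.prod_range_succ (fun i => P.eval ((n + i : ℕ) : ℂ)) d]
        have e3 : n + (d + 1) = n + d + 1 := by omega
        rw [e3] at hQlast ⊢
        push_cast at hQlast hQprod ⊢
        field_simp
        ring
end

section
/- For |t| < 1, the hypergeometric function satisfies F(λ, -λ; 1; t) = Σ_{k≥0} (-1)^k Li_{{2}^k}(t) λ^{2k}, where Li_{{2}^k}(t) = Σ_{0<n_1<…<n_k} t^{n_k}/(n_1²⋯n_k²) is the multiple polylogarithm with k twos (and Li_{{2}^0}(t) = 1). -/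
open scoped Nat

/-- The multiple polylogarithm `Li_{2,…,2}(t)` with `k` twos (complex version). -/
noncomputable def liTwosC (k : ℕ) (t : ℂ) : ℂ :=
  ∑' f : {f : Fin k → ℕ // StrictMono f},
    t ^ (if h : 0 < k then f.1 ⟨k - 1, Nat.sub_lt h one_pos⟩ + 1 else 0)
      * ∏ i, (1 : ℂ) / ((f.1 i : ℂ) + 1) ^ 2

open Finset

namespace LiTwosAux


/-- `nval S = max S + 1` for nonempty `S`, else `0`. -/
def nval (S : Finset ℕ) : ℕ := if h : S.Nonempty then S.max' h + 1 else 0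

/-- generic term indexed by a finset -/
noncomputable def gterm {R : Type*} [Field R] (ν r : R) (S : Finset ℕ) : R :=
  r ^ nval S * ∏ j ∈ S, ν / ((j : R) + 1) ^ 2

/-- fiber type for grouping by `nval`. -/
def Fib : ℕ → Type
  | 0 => PUnit
  | n + 1 => Finset (Fin n)

instance : ∀ n, Fintype (Fib n)
  | 0 => inferInstanceAs (Fintype PUnit)
  | n + 1 => inferInstanceAs (Fintype (Finset (Fin n)))

def aTo : (Σ n, Fib n) → Finset ℕ
  | ⟨0, _⟩ => ∅
  | ⟨n + 1, T⟩ => insert n (Finset.map Fin.valEmbedding (T : Finset (Fin n)))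

lemma mem_mapval {n : ℕ} {T : Finset (Fin n)} {m : ℕ}
    (h : m ∈ Finset.map Fin.valEmbedding T) : m < n := by
  rcases Finset.mem_map.1 h with ⟨i, _, rfl⟩
  exact i.isLt

lemma not_mem_mapval {n : ℕ} (T : Finset (Fin n)) : n ∉ Finset.map Fin.valEmbedding T :=
  fun h => lt_irrefl n (mem_mapval h)

lemma aTo_injective : Function.Injective aTo := by
  rintro ⟨n, x⟩ ⟨m, y⟩ h
  induction n with
  | zero => induction m with
    | zero => cases x; cases y; rfl
    | succ m _ =>
      exfalso
      have : (∅ : Finset ℕ) = insert m (Finset.map Fin.valEmbedding (y : Finset (Fin m))) := h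
      exact (Finset.insert_ne_empty _ _) this.symm
  | succ n _ => induction m with
    | zero =>
      exfalso
      have : insert n (Finset.map Fin.valEmbedding (x : Finset (Fin n))) = (∅ : Finset ℕ) := h
      exact (Finset.insert_ne_empty _ _) this
    | succ m _ =>
      have h' : insert n (Finset.map Fin.valEmbedding (x : Finset (Fin n)))
          = insert m (Finset.map Fin.valEmbedding (y : Finset (Fin m))) := h
      have hnm : n = m := by
        have h1 : n ∈ insert m (Finset.map Fin.valEmbedding (y : Finset (Fin m))) :=
          h' ▸ Finset.mem_insert_self n _
        have h2 : m ∈ insert n (Finset.map Fin.valEmbedding (x : Finset (Fin n))) :=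
          h'.symm ▸ Finset.mem_insert_self m _
        rcases Finset.mem_insert.1 h1 with h1 | h1
        · exact h1
        · rcases Finset.mem_insert.1 h2 with h2 | h2
          · exact h2.symm
          · exact absurd (mem_mapval h1) (by have := mem_mapval h2; omega)
      subst hnm
      have hxy : Finset.map Fin.valEmbedding (x : Finset (Fin n))
          = Finset.map Fin.valEmbedding (y : Finset (Fin n)) := by
        have h3 := congrArg (fun s => Finset.erase s n) h'
        simpa [Finset.erase_insert (not_mem_mapval x),
          Finset.erase_insert (not_mem_mapval y)] using h3
      have : (x : Finset (Fin n)) = y := Finset.map_injective _ hxy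
      exact congrArg (Sigma.mk (n + 1)) this

lemma aTo_surjective : Function.Surjective aTo := by
  intro S
  by_cases h : S.Nonempty
  · have hlt : ∀ m ∈ S.erase (S.max' h), m < S.max' h := fun m hm =>
      lt_of_le_of_ne (S.le_max' m (Finset.mem_of_mem_erase hm)) (Finset.ne_of_mem_erase hm)
    refine ⟨⟨S.max' h + 1, Finset.attachFin (S.erase (S.max' h)) hlt⟩, ?_⟩
    show insert (S.max' h) (Finset.map Fin.valEmbedding _) = S
    have hmap : Finset.map Fin.valEmbedding (Finset.attachFin (S.erase (S.max' h)) hlt)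
        = S.erase (S.max' h) := by
      ext m
      constructor
      · intro hm
        rcases Finset.mem_map.1 hm with ⟨a, ha, rfl⟩
        exact (Finset.mem_attachFin hlt).1 ha
      · intro hm
        exact Finset.mem_map.2 ⟨⟨m, hlt m hm⟩, (Finset.mem_attachFin hlt).2 hm, rfl⟩
    rw [hmap, Finset.insert_erase (S.max'_mem h)]
  · exact ⟨⟨0, PUnit.unit⟩, by
      simp only [aTo]
      exact (Finset.not_nonempty_iff_eq_empty.1 h).symm⟩

noncomputable def aEquiv : (Σ n, Fib n) ≃ Finset ℕ :=
  Equiv.ofBijective aTo ⟨aTo_injective, aTo_surjective⟩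

def bTo : (Σ k, {f : Fin k → ℕ // StrictMono f}) → Finset ℕ
  | ⟨_, f⟩ => Finset.image f.1 Finset.univ

lemma bTo_injective : Function.Injective bTo := by
  rintro ⟨k, f, hf⟩ ⟨k', f', hf'⟩ h
  simp only [bTo] at h
  have hk : k = k' := by
    have hc := congrArg Finset.card h
    rwa [Finset.card_image_of_injective _ hf.injective,
      Finset.card_image_of_injective _ hf'.injective, Finset.card_univ, Finset.card_univ,
      Fintype.card_fin, Fintype.card_fin] at hc
  subst hk
  have hcard : (Finset.image f Finset.univ).card = k := by
    rw [Finset.card_image_of_injective _ hf.injective, Finset.card_univ, Fintype.card_fin]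
  have h1 := Finset.orderEmbOfFin_unique hcard
    (fun x => Finset.mem_image_of_mem f (Finset.mem_univ x)) hf
  have h2 := Finset.orderEmbOfFin_unique hcard
    (fun x => h ▸ Finset.mem_image_of_mem f' (Finset.mem_univ x)) hf'
  exact congrArg (Sigma.mk k) (Subtype.ext (h1.trans h2.symm))

lemma bTo_surjective : Function.Surjective bTo := by
  intro S
  refine ⟨⟨S.card, ⟨S.orderEmbOfFin rfl, (S.orderEmbOfFin rfl).strictMono⟩⟩, ?_⟩
  simp only [bTo]
  apply Finset.eq_of_subset_of_card_le
  · intro x hx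
    rcases Finset.mem_image.1 hx with ⟨i, _, rfl⟩
    exact Finset.orderEmbOfFin_mem S rfl i
  · rw [Finset.card_image_of_injective _ (S.orderEmbOfFin rfl).injective, Finset.card_univ,
      Fintype.card_fin]

noncomputable def bEquiv : (Σ k, {f : Fin k → ℕ // StrictMono f}) ≃ Finset ℕ :=
  Equiv.ofBijective bTo ⟨bTo_injective, bTo_surjective⟩

lemma sum_finset_prod {R : Type*} [CommRing R] (a : ℕ → R) (n : ℕ) :
    ∑ T : Finset (Fin n), ∏ j ∈ Finset.map Fin.valEmbedding T, a j
      = ∏ j ∈ Finset.range n, (1 + a j) := by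
  have h1 : ∀ T : Finset (Fin n), ∏ j ∈ Finset.map Fin.valEmbedding T, a j
      = ∏ i ∈ T, a i := fun T => Finset.prod_map T Fin.valEmbedding a
  have h2 := Finset.prod_add (fun i : Fin n => a i.val) (fun _ => (1 : R)) Finset.univ
  simp only [Finset.prod_const_one, mul_one, Finset.powerset_univ] at h2
  calc ∑ T : Finset (Fin n), ∏ j ∈ Finset.map Fin.valEmbedding T, a j
      = ∑ T : Finset (Fin n), ∏ i ∈ T, a i := by simp_rw [h1]
    _ = ∏ i : Fin n, (a i.val + 1) := h2.symm
    _ = ∏ j ∈ Finset.range n, (1 + a j) := by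
        rw [Fin.prod_univ_eq_prod_range (fun j => a j + 1) n]
        exact Finset.prod_congr rfl fun j _ => add_comm _ _

lemma sum_insert_prod {R : Type*} [CommRing R] (a : ℕ → R) (n : ℕ) :
    ∑ T : Finset (Fin n), ∏ j ∈ insert n (Finset.map Fin.valEmbedding T), a j
      = a n * ∏ j ∈ Finset.range n, (1 + a j) := by
  rw [← sum_finset_prod a n, Finset.mul_sum]
  exact Finset.sum_congr rfl fun T _ => Finset.prod_insert (not_mem_mapval T)

lemma nval_insert {n : ℕ} (T : Finset (Fin n)) :
    nval (insert n (Finset.map Fin.valEmbedding T)) = n + 1 := by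
  have hne : (insert n (Finset.map Fin.valEmbedding T)).Nonempty := Finset.insert_nonempty _ _
  rw [nval, dif_pos hne]
  congr 1
  refine le_antisymm (Finset.max'_le _ _ _ fun b hb => ?_)
    (Finset.le_max' _ n (Finset.mem_insert_self _ _))
  rcases Finset.mem_insert.1 hb with rfl | hb
  · exact le_rfl
  · exact (mem_mapval hb).le

lemma fiber_sum {R : Type*} [Field R] (ν r : R) (n : ℕ) :
    ∑ x : Fib (n + 1), gterm ν r (aTo ⟨n + 1, x⟩)
      = r ^ (n + 1) * (ν / ((n : R) + 1) ^ 2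
          * ∏ j ∈ Finset.range n, (1 + ν / ((j : R) + 1) ^ 2)) := by
  have : ∀ T : Finset (Fin n), gterm ν r (aTo ⟨n + 1, T⟩)
      = r ^ (n + 1) * ∏ j ∈ insert n (Finset.map Fin.valEmbedding T),
          (ν / ((j : R) + 1) ^ 2) := by
    intro T
    show gterm ν r (insert n (Finset.map Fin.valEmbedding T)) = _
    rw [gterm, nval_insert]
  calc ∑ x : Fib (n + 1), gterm ν r (aTo ⟨n + 1, x⟩)
      = ∑ T : Finset (Fin n), r ^ (n + 1) * ∏ j ∈ insert n (Finset.map Fin.valEmbedding T),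
          (ν / ((j : R) + 1) ^ 2) := Finset.sum_congr rfl fun T _ => this T
    _ = r ^ (n + 1) * ∑ T : Finset (Fin n), ∏ j ∈ insert n (Finset.map Fin.valEmbedding T),
          (ν / ((j : R) + 1) ^ 2) := by rw [Finset.mul_sum]
    _ = _ := by rw [sum_insert_prod (fun j => ν / ((j : R) + 1) ^ 2) n]

lemma fiber_sum_zero {R : Type*} [Field R] (ν r : R) :
    ∑ x : Fib 0, gterm ν r (aTo ⟨0, x⟩) = 1 := by
  show ∑ _x : PUnit, gterm ν r ∅ = 1
  simp [gterm, nval]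

lemma norm_gterm (μ t : ℂ) (S : Finset ℕ) :
    ‖gterm μ t S‖ = gterm ‖μ‖ ‖t‖ S := by
  rw [gterm, gterm, norm_mul, norm_pow, norm_prod]
  congr 1
  refine Finset.prod_congr rfl fun j _ => ?_
  rw [norm_div, norm_pow]
  congr 2
  rw [show ((j : ℂ) + 1) = ((j + 1 : ℕ) : ℂ) by push_cast; ring, Complex.norm_natCast]
  push_cast; ring


lemma poch_prod (x : ℂ) (n : ℕ) :
    (ascPochhammer ℂ n).eval x = ∏ j ∈ Finset.range n, (x + j) := by
  induction n with
  | zero => simp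
  | succ n ih => rw [ascPochhammer_succ_eval, Finset.prod_range_succ, ih]

lemma poch_mul (l : ℂ) (n : ℕ) :
    (ascPochhammer ℂ n).eval l * (ascPochhammer ℂ n).eval (-l)
      = ∏ j ∈ Finset.range n, ((j : ℂ) ^ 2 - l ^ 2) := by
  rw [poch_prod, poch_prod, ← Finset.prod_mul_distrib]
  exact Finset.prod_congr rfl fun j _ => by ring

lemma term_eq (l t : ℂ) (n : ℕ) :
    (ascPochhammer ℂ (n + 1)).eval l * (ascPochhammer ℂ (n + 1)).eval (-l)
        * t ^ (n + 1) / (((n + 1)! : ℂ)) ^ 2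
      = t ^ (n + 1) * ((-l ^ 2) / ((n : ℂ) + 1) ^ 2
          * ∏ j ∈ Finset.range n, (1 + (-l ^ 2) / ((j : ℂ) + 1) ^ 2)) := by
  have hfac : (((n + 1)! : ℂ)) = ((n : ℂ) + 1) * ∏ j ∈ Finset.range n, ((j : ℂ) + 1) := by
    rw [Nat.factorial_succ, ← Finset.prod_range_add_one_eq_factorial n]
    push_cast
    ring
  have hpoch : (ascPochhammer ℂ (n + 1)).eval l * (ascPochhammer ℂ (n + 1)).eval (-l)
      = (-l ^ 2) * ∏ j ∈ Finset.range n, (((j : ℂ) + 1) ^ 2 - l ^ 2) := by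
    rw [poch_mul, Finset.prod_range_succ']
    rw [Finset.prod_congr rfl (fun j (_ : j ∈ Finset.range n) =>
      (by push_cast; ring : (((j + 1 : ℕ) : ℂ)) ^ 2 - l ^ 2 = ((j : ℂ) + 1) ^ 2 - l ^ 2))]
    push_cast
    ring
  have hne : ∀ j ∈ Finset.range n, ((j : ℂ) + 1) ≠ 0 := fun j _ =>
    Nat.cast_add_one_ne_zero j
  have hprod : ∏ j ∈ Finset.range n, (1 + (-l ^ 2) / ((j : ℂ) + 1) ^ 2)
      = (∏ j ∈ Finset.range n, (((j : ℂ) + 1) ^ 2 - l ^ 2))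
        / ∏ j ∈ Finset.range n, ((j : ℂ) + 1) ^ 2 := by
    rw [← Finset.prod_div_distrib]
    refine Finset.prod_congr rfl fun j hj => ?_
    rw [sub_div, div_self (pow_ne_zero 2 (hne j hj))]
    ring
  have key : ∀ P Q c T L : ℂ, Q ≠ 0 → c ≠ 0 →
      L * P * T / (c * Q) ^ 2 = T * (L / c ^ 2 * (P / Q ^ 2)) := by
    intros P Q c T L hQ hc
    field_simp
  rw [hpoch, hprod, hfac, Finset.prod_pow]
  exact key _ _ _ _ _ (Finset.prod_ne_zero_iff.2 hne) (Nat.cast_add_one_ne_zero n)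

noncomputable def K : ℝ := ∑' j : ℕ, 1 / ((j : ℝ) + 1) ^ 2

lemma hKsum : Summable (fun j : ℕ => 1 / ((j : ℝ) + 1) ^ 2) := by
  have h : Summable (fun n : ℕ => 1 / (n : ℝ) ^ 2) := Real.summable_one_div_nat_pow.mpr one_lt_two
  exact ((summable_nat_add_iff 1).mpr h).congr fun j => by push_cast; ring

lemma prod_exp_bound (c : ℝ) (hc : 0 ≤ c) (n : ℕ) :
    ∏ j ∈ Finset.range n, (1 + c / ((j : ℝ) + 1) ^ 2) ≤ Real.exp (c * K) := by
  have h1 : ∏ j ∈ Finset.range n, (1 + c / ((j : ℝ) + 1) ^ 2)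
      ≤ ∏ j ∈ Finset.range n, Real.exp (c / ((j : ℝ) + 1) ^ 2) := by
    refine Finset.prod_le_prod (fun j _ => by positivity) (fun j _ => ?_)
    linarith [Real.add_one_le_exp (c / ((j : ℝ) + 1) ^ 2)]
  refine h1.trans ?_
  rw [← Real.exp_sum]
  apply Real.exp_le_exp.mpr
  have h2 : ∑ j ∈ Finset.range n, c / ((j : ℝ) + 1) ^ 2
      = c * ∑ j ∈ Finset.range n, 1 / ((j : ℝ) + 1) ^ 2 := by
    rw [Finset.mul_sum]
    exact Finset.sum_congr rfl fun j _ => by ring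
  rw [h2]
  exact mul_le_mul_of_nonneg_left (Summable.sum_le_tsum _ (fun i _ => by positivity) hKsum) hc

lemma nval_image {k : ℕ} (f : Fin k → ℕ) (hf : StrictMono f) :
    nval (Finset.image f Finset.univ)
      = if h : 0 < k then f ⟨k - 1, Nat.sub_lt h one_pos⟩ + 1 else 0 := by
  rcases Nat.eq_zero_or_pos k with rfl | hk
  · simp [nval]
  · rw [dif_pos hk]
    have hmem : f ⟨k - 1, Nat.sub_lt hk one_pos⟩ ∈ Finset.image f Finset.univ :=
      Finset.mem_image_of_mem f (Finset.mem_univ _)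
    have hne : (Finset.image f Finset.univ).Nonempty := ⟨_, hmem⟩
    rw [nval, dif_pos hne]
    congr 1
    refine le_antisymm (Finset.max'_le _ _ _ fun b hb => ?_) (Finset.le_max' _ _ hmem)
    rcases Finset.mem_image.1 hb with ⟨i, _, rfl⟩
    exact hf.monotone (by omega : (i : ℕ) ≤ k - 1)

lemma bterm_eq (μ t : ℂ) (k : ℕ) (f : {f : Fin k → ℕ // StrictMono f}) :
    gterm μ t (bTo ⟨k, f⟩)
      = μ ^ k * (t ^ (if h : 0 < k then f.1 ⟨k - 1, Nat.sub_lt h one_pos⟩ + 1 else 0)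
          * ∏ i, (1 : ℂ) / ((f.1 i : ℂ) + 1) ^ 2) := by
  show gterm μ t (Finset.image f.1 Finset.univ) = _
  rw [gterm, nval_image f.1 f.2,
    Finset.prod_image (fun i _ j _ h => f.2.injective h)]
  have h1 : ∏ i : Fin k, μ / ((f.1 i : ℂ) + 1) ^ 2
      = μ ^ k * ∏ i : Fin k, (1 : ℂ) / ((f.1 i : ℂ) + 1) ^ 2 := by
    rw [Finset.prod_congr rfl (fun i (_ : i ∈ Finset.univ) =>
        div_eq_mul_one_div μ (((f.1 i : ℂ) + 1) ^ 2)),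
      Finset.prod_mul_distrib, Finset.prod_const, Finset.card_univ, Fintype.card_fin]
  rw [h1]
  ring

lemma aEquiv_apply (p : Σ n, Fib n) : aEquiv p = aTo p := rfl

lemma bEquiv_apply (b : Σ k, {f : Fin k → ℕ // StrictMono f}) : bEquiv b = bTo b := rfl

end LiTwosAux

open LiTwosAux in
/-- For `‖t‖ < 1`, the hypergeometric function satisfies
`F(λ, -λ; 1; t) = Σ_{k≥0} (-1)^k Li_{{2}^k}(t) λ^{2k}`. -/
theorem hypergeometric_eq_liTwos_series (l t : ℂ) (ht : ‖t‖ < 1) :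
    ∑' n : ℕ, (ascPochhammer ℂ n).eval l * (ascPochhammer ℂ n).eval (-l)
        * t ^ n / ((n ! : ℂ)) ^ 2
      = ∑' k : ℕ, (-1) ^ k * liTwosC k t * l ^ (2 * k) := by
  set μ : ℂ := -l ^ 2 with hμ
  set C : ℝ := max 1 (‖μ‖ * Real.exp (‖μ‖ * K)) with hC
  have hfibeq : ∀ n : ℕ, (∑' x : Fib n, ‖gterm μ t (aTo ⟨n, x⟩)‖)
      = ∑ x : Fib n, gterm ‖μ‖ ‖t‖ (aTo ⟨n, x⟩) := by
    intro n
    rw [tsum_fintype]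
    exact Finset.sum_congr rfl fun x _ => norm_gterm μ t _
  have hbound : ∀ n : ℕ, (∑' x : Fib n, ‖gterm μ t (aTo ⟨n, x⟩)‖) ≤ C * ‖t‖ ^ n := by
    intro n
    rw [hfibeq n]
    cases n with
    | zero =>
      rw [fiber_sum_zero, pow_zero, mul_one, hC]
      exact le_max_left _ _
    | succ n =>
      rw [fiber_sum]
      have h1 : (1 : ℝ) ≤ ((n : ℝ) + 1) ^ 2 := by nlinarith [Nat.cast_nonneg (α := ℝ) n]
      have hX : ‖μ‖ / ((n : ℝ) + 1) ^ 2
            * ∏ j ∈ Finset.range n, (1 + ‖μ‖ / ((j : ℝ) + 1) ^ 2)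
          ≤ ‖μ‖ * Real.exp (‖μ‖ * K) :=
        mul_le_mul (div_le_self (norm_nonneg μ) h1)
          (prod_exp_bound ‖μ‖ (norm_nonneg μ) n)
          (Finset.prod_nonneg fun j _ => by positivity) (norm_nonneg μ)
      calc ‖t‖ ^ (n + 1) * (‖μ‖ / ((n : ℝ) + 1) ^ 2
              * ∏ j ∈ Finset.range n, (1 + ‖μ‖ / ((j : ℝ) + 1) ^ 2))
          ≤ ‖t‖ ^ (n + 1) * (‖μ‖ * Real.exp (‖μ‖ * K)) :=
            mul_le_mul_of_nonneg_left hX (pow_nonneg (norm_nonneg t) _)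
        _ ≤ ‖t‖ ^ (n + 1) * C :=
            mul_le_mul_of_nonneg_left (hC ▸ le_max_right _ _) (pow_nonneg (norm_nonneg t) _)
        _ = C * ‖t‖ ^ (n + 1) := mul_comm _ _
  have hsum_norm : Summable (fun p : Σ n, Fib n => ‖gterm μ t (aTo p)‖) := by
    refine (summable_sigma_of_nonneg fun p => norm_nonneg _).2
      ⟨fun n => Summable.of_finite, ?_⟩
    refine Summable.of_nonneg_of_le (fun n => tsum_nonneg fun x => norm_nonneg _) hbound ?_
    exact (summable_geometric_of_lt_one (norm_nonneg t) ht).mul_left C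
  have hsumA : Summable (fun p : Σ n, Fib n => gterm μ t (aTo p)) :=
    Summable.of_norm hsum_norm
  have hsumFinset : Summable (gterm μ t) := by
    have h : (fun p : Σ n, Fib n => gterm μ t (aTo p)) = gterm μ t ∘ aEquiv := rfl
    exact aEquiv.summable_iff.mp (h ▸ hsumA)
  have hsumB : Summable (fun b : Σ k, {f : Fin k → ℕ // StrictMono f} => gterm μ t (bTo b)) := by
    have h : (fun b : Σ k, {f : Fin k → ℕ // StrictMono f} => gterm μ t (bTo b))
        = gterm μ t ∘ bEquiv := rfl
    rw [h]
    exact bEquiv.summable_iff.mpr hsumFinset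
  have step1 : ∀ n : ℕ, (ascPochhammer ℂ n).eval l * (ascPochhammer ℂ n).eval (-l)
        * t ^ n / ((n ! : ℂ)) ^ 2
      = ∑' x : Fib n, gterm μ t (aTo ⟨n, x⟩) := by
    intro n
    rw [tsum_fintype]
    cases n with
    | zero => rw [fiber_sum_zero]; simp
    | succ n =>
      rw [fiber_sum]
      have h := term_eq l t n
      rw [← hμ] at h
      exact h
  calc ∑' n : ℕ, (ascPochhammer ℂ n).eval l * (ascPochhammer ℂ n).eval (-l)
          * t ^ n / ((n ! : ℂ)) ^ 2
      = ∑' n : ℕ, ∑' x : Fib n, gterm μ t (aTo ⟨n, x⟩) := tsum_congr step1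
    _ = ∑' p : Σ n, Fib n, gterm μ t (aTo p) :=
        (Summable.tsum_sigma' (fun n => Summable.of_finite) hsumA).symm
    _ = ∑' S : Finset ℕ, gterm μ t S := aEquiv.tsum_eq (gterm μ t)
    _ = ∑' b : Σ k, {f : Fin k → ℕ // StrictMono f}, gterm μ t (bTo b) :=
        (bEquiv.tsum_eq (gterm μ t)).symm
    _ = ∑' k : ℕ, ∑' f : {f : Fin k → ℕ // StrictMono f}, gterm μ t (bTo ⟨k, f⟩) :=
        Summable.tsum_sigma' (fun k => hsumB.sigma_factor k) hsumB
    _ = ∑' k : ℕ, (-1) ^ k * liTwosC k t * l ^ (2 * k) := by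
        refine tsum_congr fun k => ?_
        rw [tsum_congr (fun f => bterm_eq μ t k f), tsum_mul_left]
        show μ ^ k * liTwosC k t = _
        rw [hμ, neg_pow, pow_mul]
        ring
end
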